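/- Let I ⊆ ℝ be an interval and let x, y : I → ℝ be differentiable functions such that 2 t + 2 x(t) + 5 > 0 for all t ∈ I, and such that x'(t) = y(t) and y'(t) = (9 t + 9 x(t) + 7) / (2 t + 2 x(t) + 5) for all t ∈ I. Then the function t ↦ (1/2) y(t)² + y(t) − (9/2) (t + x(t)) + (31/4) · log(2 t + 2 x(t) + 5) is constant on I. -/

import Mathlib

/-!
Along a solution, `ξ = t + x` satisfies `ξ' = 1 + y` and the equation reads `y' = F ξ` with
`F ξ = (9ξ + 7) / (2ξ + 5)`. Hence for any primitive `G` of `F` the energy `½ y² + y - G ξ` has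
derivative `(1 + y) F ξ - G' ξ (1 + y) = 0`, and a primitive is
`G ξ = (9/2) ξ - (31/4) log (2ξ + 5)` since `F ξ = 9/2 - 31 / (2 (2ξ + 5))`.
-/

theorem Convex.eq_of_forall_hasDerivWithinAt_zero {E : Type*} [NormedAddCommGroup E]
    [NormedSpace ℝ E] {f : ℝ → E} {s : Set ℝ} (hs : Convex ℝ s)
    (hf : ∀ t ∈ s, HasDerivWithinAt f 0 s t) {a b : ℝ} (ha : a ∈ s) (hb : b ∈ s) :
    f a = f b := by
  have h := hs.norm_image_sub_le_of_norm_hasDerivWithin_le hf (fun _ _ ↦ norm_zero.le) hb ha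
  rw [zero_mul, norm_le_zero_iff, sub_eq_zero] at h
  exact h

theorem hasDerivAt_energy_of_hasDerivAt_primitive {x y G F : ℝ → ℝ} {t : ℝ}
    (hx : HasDerivAt x (y t) t) (hy : HasDerivAt y (F (t + x t)) t)
    (hG : HasDerivAt G (F (t + x t)) (t + x t)) :
    HasDerivAt (fun t ↦ (1 / 2) * y t ^ 2 + y t - G (t + x t)) 0 t := by
  have hξ : HasDerivAt (fun t ↦ t + x t) (1 + y t) t := (hasDerivAt_id t).add hx
  refine (((hy.pow 2).const_mul (1 / 2 : ℝ)).add hy |>.sub (hG.comp t hξ)).congr_deriv ?_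
  push_cast
  ring

theorem hasDerivAt_traveling_wave_potential {ξ : ℝ} (hξ : 2 * ξ + 5 ≠ 0) :
    HasDerivAt (fun ξ ↦ (9 / 2) * ξ - (31 / 4) * Real.log (2 * ξ + 5))
      ((9 * ξ + 7) / (2 * ξ + 5)) ξ := by
  have hlin : HasDerivAt (fun ξ ↦ 2 * ξ + 5) 2 ξ := by
    simpa using ((hasDerivAt_id ξ).const_mul 2).add_const 5
  refine (((hasDerivAt_id ξ).const_mul (9 / 2 : ℝ)).sub
    (((Real.hasDerivAt_log hξ).comp ξ hlin).const_mul (31 / 4 : ℝ))).congr_deriv ?_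
  field_simp
  ring

/-- **Energy-type first integral of the traveling-wave system.**
If on an interval `I` we have `2 t + 2 x t + 5 > 0`, `x' = y` and
`y' = (9 t + 9 x + 7) / (2 t + 2 x + 5)`, then
`t ↦ (1/2) y² + y - (9/2)(t + x) + (31/4) log (2 t + 2 x + 5)` is constant on `I`. -/
theorem traveling_wave_system_first_integral
    (I : Set ℝ) (hI : I.OrdConnected)
    (x y : ℝ → ℝ)
    (hpos : ∀ t ∈ I, 2 * t + 2 * x t + 5 > 0)
    (hx : ∀ t ∈ I, HasDerivAt x (y t) t)
    (hy : ∀ t ∈ I, HasDerivAt y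
      ((9 * t + 9 * x t + 7) / (2 * t + 2 * x t + 5)) t) :
    ∀ s ∈ I, ∀ t ∈ I,
      (1 / 2) * y t ^ 2 + y t - (9 / 2) * (t + x t)
          + (31 / 4) * Real.log (2 * t + 2 * x t + 5)
        = (1 / 2) * y s ^ 2 + y s - (9 / 2) * (s + x s)
          + (31 / 4) * Real.log (2 * s + 2 * x s + 5) := by
  set G : ℝ → ℝ := fun ξ ↦ (9 / 2) * ξ - (31 / 4) * Real.log (2 * ξ + 5)
  have hV : ∀ t, (1 / 2) * y t ^ 2 + y t - (9 / 2) * (t + x t)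
      + (31 / 4) * Real.log (2 * t + 2 * x t + 5) = (1 / 2) * y t ^ 2 + y t - G (t + x t) := by
    intro t
    simp only [G, mul_add]
    ring
  have hderiv : ∀ t ∈ I,
      HasDerivWithinAt (fun t ↦ (1 / 2) * y t ^ 2 + y t - G (t + x t)) 0 I t := by
    intro t ht
    have hξ : 2 * (t + x t) + 5 ≠ 0 := by linarith [hpos t ht]
    refine (hasDerivAt_energy_of_hasDerivAt_primitive (G := G)
      (F := fun ξ ↦ (9 * ξ + 7) / (2 * ξ + 5)) (hx t ht) ?_
      (hasDerivAt_traveling_wave_potential hξ)).hasDerivWithinAt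
    convert hy t ht using 2 <;> ring
  intro s hs t ht
  rw [hV, hV]
  exact hI.convex.eq_of_forall_hasDerivWithinAt_zero hderiv ht hs
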